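/- arXiv:2004.02578 — 2 statements merged into one kernel-verified Lean document; each statement's English description precedes it below -/
import Mathlib

section
/- Let f : ℝ → ℝ be continuous with f(0) = 0, and define F(t) = ∫₀ᵗ f(s) ds. If for some p ≥ 2 the function t ↦ f(t)/(|t|^(p-2) t) is increasing on (0,∞) and decreasing on (-∞,0), then p·F(t) ≤ t·f(t) for all t ≠ 0. -/
theorem stmt_0 (f : ℝ → ℝ) (p : ℝ) (hp : 2 ≤ p)
    (hf : Continuous f) (hf0 : f 0 = 0)
    (F : ℝ → ℝ) (hF : ∀ t, F t = ∫ s in (0:ℝ)..t, f s)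
    (hinc : ∀ s t : ℝ, 0 < s → s < t → f s / s ^ (p - 1) ≤ f t / t ^ (p - 1))
    (hdec : ∀ s t : ℝ, s < t → t < 0 →
      f t / (|t| ^ (p - 2) * t) ≤ f s / (|s| ^ (p - 2) * s)) :
    ∀ t : ℝ, t ≠ 0 → p * F t ≤ t * f t := by
  have hp0 : (0:ℝ) < p := by linarith
  have hp1 : p - 1 ≠ 0 := by linarith
  intro t ht
  rcases lt_or_gt_of_ne ht with htneg | htpos
  · -- t < 0
    have habs : |t| = -t := abs_of_neg htneg
    have hmt : (0:ℝ) < -t := by linarith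
    have hdenpos : (0:ℝ) < (-t) ^ (p - 2) := Real.rpow_pos_of_pos hmt _
    have hden : |t| ^ (p - 2) * t ≠ 0 := by rw [habs]; exact mul_ne_zero hdenpos.ne' ht
    set c := f t / (|t| ^ (p - 2) * t) with hc
    have hle : ∀ s ∈ Set.Icc t 0, c * (|s| ^ (p - 2) * s) ≤ f s := by
      rintro s ⟨hts, hs0⟩
      rcases eq_or_lt_of_le hts with rfl | hts'
      · rw [hc, div_mul_cancel₀ _ hden]
      rcases eq_or_lt_of_le hs0 with rfl | hs0'
      · simp [hf0]
      · have h := hdec t s hts' hs0'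
        have hsden : |s| ^ (p - 2) * s < 0 := by
          have : (0:ℝ) < |s| ^ (p - 2) := Real.rpow_pos_of_pos (abs_pos.mpr hs0'.ne) _
          exact mul_neg_of_pos_of_neg this hs0'
        have := mul_le_mul_of_nonpos_right h hsden.le
        rwa [div_mul_cancel₀ _ hsden.ne] at this
    have hint1 : IntervalIntegrable f MeasureTheory.volume t 0 := hf.intervalIntegrable _ _
    have hcontm : Continuous fun s : ℝ => c * (|s| ^ (p - 2) * s) := by
      apply continuous_const.mul
      exact (continuous_abs.rpow_const fun x => Or.inr (by linarith)).mul continuous_id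
    have hint2 : IntervalIntegrable (fun s => c * (|s| ^ (p - 2) * s))
        MeasureTheory.volume t 0 := hcontm.intervalIntegrable _ _
    have hmono := intervalIntegral.integral_mono_on htneg.le hint2 hint1 hle
    have heqon : Set.EqOn (fun s : ℝ => |s| ^ (p - 2) * s)
        (fun s : ℝ => -((-s) ^ (p - 1))) (Set.uIcc t 0) := by
      intro s hs
      rw [Set.uIcc_of_le htneg.le] at hs
      rcases eq_or_lt_of_le hs.2 with rfl | hs0'
      · simp [Real.zero_rpow hp1]
      · have hms : (0:ℝ) < -s := by linarith
        simp only [abs_of_neg hs0']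
        rw [show p - 1 = (p - 2) + 1 by ring, Real.rpow_add hms, Real.rpow_one]
        ring
    have hIm : ∫ s in t..(0:ℝ), |s| ^ (p - 2) * s = -((-t) ^ p / p) := by
      rw [intervalIntegral.integral_congr heqon, intervalIntegral.integral_neg]
      have := intervalIntegral.integral_comp_neg (a := t) (b := 0)
        (fun x : ℝ => x ^ (p - 1))
      rw [this, neg_zero, integral_rpow (Or.inl (by linarith)),
        Real.zero_rpow (by linarith : p - 1 + 1 ≠ 0), sub_add_cancel, sub_zero]
    have hImc : ∫ s in t..(0:ℝ), c * (|s| ^ (p - 2) * s) = c * -((-t) ^ p / p) := by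
      rw [intervalIntegral.integral_const_mul, hIm]
    have hFt : F t = -∫ s in t..(0:ℝ), f s := by
      rw [hF, intervalIntegral.integral_symm]
    have hkey : F t ≤ c * ((-t) ^ p / p) := by
      rw [hFt]
      rw [hImc] at hmono
      linarith
    have hfin : c * (-t) ^ p = t * f t := by
      rw [hc, habs, div_mul_eq_mul_div, div_eq_iff (by rw [← habs]; exact hden)]
      rw [show p = (p - 2) + 2 by ring, Real.rpow_add hmt,
        show ((2:ℝ)) = ((2:ℕ):ℝ) by norm_num, Real.rpow_natCast]
      ring
    calc p * F t ≤ p * (c * ((-t) ^ p / p)) := by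
          exact mul_le_mul_of_nonneg_left hkey hp0.le
      _ = c * (-t) ^ p := by field_simp
      _ = t * f t := hfin
  · -- t > 0
    have htp : (0:ℝ) < t ^ (p - 1) := Real.rpow_pos_of_pos htpos _
    set c := f t / t ^ (p - 1) with hc
    have hle : ∀ s ∈ Set.Icc (0:ℝ) t, f s ≤ c * s ^ (p - 1) := by
      rintro s ⟨hs0, hst⟩
      rcases eq_or_lt_of_le hs0 with rfl | hs0'
      · simp [hf0, Real.zero_rpow hp1]
      rcases eq_or_lt_of_le hst with rfl | hst'
      · rw [hc, div_mul_cancel₀ _ htp.ne']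
      · have h := hinc s t hs0' hst'
        have hsp : (0:ℝ) < s ^ (p - 1) := Real.rpow_pos_of_pos hs0' _
        have := mul_le_mul_of_nonneg_right h hsp.le
        rwa [div_mul_cancel₀ _ hsp.ne'] at this
    have hint1 : IntervalIntegrable f MeasureTheory.volume 0 t := hf.intervalIntegrable _ _
    have hint2 : IntervalIntegrable (fun s => c * s ^ (p - 1))
        MeasureTheory.volume 0 t :=
      (intervalIntegral.intervalIntegrable_rpow (Or.inl (by linarith))).const_mul c
    have hmono := intervalIntegral.integral_mono_on htpos.le hint1 hint2 hle
    have hI : ∫ s in (0:ℝ)..t, c * s ^ (p - 1) = c * (t ^ p / p) := by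
      rw [intervalIntegral.integral_const_mul, integral_rpow (Or.inl (by linarith)),
        Real.zero_rpow (by linarith : p - 1 + 1 ≠ 0), sub_add_cancel, sub_zero]
    have hfin : c * t ^ p = t * f t := by
      rw [hc, div_mul_eq_mul_div, div_eq_iff htp.ne']
      rw [show p = (p - 1) + 1 by ring, Real.rpow_add htpos, Real.rpow_one]
      ring
    rw [hI] at hmono
    rw [hF] at *
    calc p * ∫ s in (0:ℝ)..t, f s ≤ p * (c * (t ^ p / p)) := by
          exact mul_le_mul_of_nonneg_left hmono hp0.le
      _ = c * t ^ p := by field_simp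
      _ = t * f t := hfin
end

section
/- Strict inequality λ₁ < λ*: Let H be a real Hilbert space compactly embedded in L^p(Ω) (p ≥ 1), with λ₁ = inf{‖u‖_H² : ‖u‖_{L^p} = 1} attained only at multiples of a function φ₁ with ‖φ₁‖_{L^p} = 1, and let W = {u ∈ H : ⟨φ₁, u⟩_H = 0}. Then λ* := inf{‖u‖_H² : u ∈ W, ‖u‖_{L^p} = 1} satisfies λ₁ < λ*. -/
/-!
If the infimum over the orthogonal complement `W` of `φ₁` were equal to `λ₁`, a minimizer in
`W` would be a multiple of `φ₁`, hence zero, which is impossible. Such a minimizer exists because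
`j` is compact: the images of a minimizing sequence have a convergent subsequence, and the
parallelogram law then forces the sequence itself to be Cauchy.
-/

open Filter Topology

section Rayleigh

variable {H E : Type*} [NormedAddCommGroup E] [NormedSpace ℝ E]

theorem sInf_mul_norm_sq_le [NormedAddCommGroup H] [NormedSpace ℝ H] (j : H →L[ℝ] E)
    (u : H) :
    sInf {c | ∃ w, ‖j w‖ = 1 ∧ c = ‖w‖ ^ 2} * ‖j u‖ ^ 2 ≤ ‖u‖ ^ 2 := by
  rcases eq_or_ne (j u) 0 with hu | hu
  · simp [hu]
  have hju : 0 < ‖j u‖ := norm_pos_iff.mpr hu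
  have hw : ‖j (‖j u‖⁻¹ • u)‖ = 1 := by
    rw [map_smul, norm_smul, norm_inv, norm_norm, inv_mul_cancel₀ hju.ne']
  calc sInf {c | ∃ w, ‖j w‖ = 1 ∧ c = ‖w‖ ^ 2} * ‖j u‖ ^ 2
      ≤ ‖‖j u‖⁻¹ • u‖ ^ 2 * ‖j u‖ ^ 2 := by
        gcongr
        exact csInf_le ⟨0, by rintro _ ⟨w, -, rfl⟩; positivity⟩ ⟨_, hw, rfl⟩
    _ = ‖u‖ ^ 2 := by
        rw [norm_smul, norm_inv, norm_norm]
        field_simp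

variable [NormedAddCommGroup H] [InnerProductSpace ℝ H] (j : H →L[ℝ] E)

theorem cauchySeq_of_tendsto_norm_sq {μ : ℝ} (hμ : ∀ u, μ * ‖j u‖ ^ 2 ≤ ‖u‖ ^ 2)
    {u : ℕ → H} {v : E} (hju : Tendsto (fun n ↦ j (u n)) atTop (𝓝 v))
    (hu : Tendsto (fun n ↦ ‖u n‖ ^ 2) atTop (𝓝 (μ * ‖v‖ ^ 2))) : CauchySeq u := by
  have hbound : ∀ m n, ‖u m - u n‖ ^ 2 ≤
      2 * ‖u m‖ ^ 2 + 2 * ‖u n‖ ^ 2 - μ * ‖j (u m) + j (u n)‖ ^ 2 := by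
    intro m n
    have hsum := hμ (u m + u n)
    rw [map_add] at hsum
    linarith [parallelogram_law_with_norm ℝ (u m) (u n)]
  have hlim : Tendsto (fun p : ℕ × ℕ ↦
      2 * ‖u p.1‖ ^ 2 + 2 * ‖u p.2‖ ^ 2 - μ * ‖j (u p.1) + j (u p.2)‖ ^ 2) atTop (𝓝 0) := by
    have h0 : 2 * (μ * ‖v‖ ^ 2) + 2 * (μ * ‖v‖ ^ 2) - μ * ‖v + v‖ ^ 2 = 0 := by
      rw [← two_smul ℝ v, norm_smul]
      norm_num
      ring
    rw [← prod_atTop_atTop_eq, ← h0]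
    have hj2 := ((hju.comp tendsto_fst).add (hju.comp tendsto_snd)).norm.pow 2
    exact (((hu.comp tendsto_fst).const_mul 2).add ((hu.comp tendsto_snd).const_mul 2)).sub
      (hj2.const_mul μ)
  have hdist : Tendsto (fun p : ℕ × ℕ ↦ dist (u p.1) (u p.2) ^ 2) atTop (𝓝 0) :=
    squeeze_zero (fun _ ↦ sq_nonneg _) (fun p ↦ dist_eq_norm (u p.1) (u p.2) ▸ hbound _ _)
      hlim
  rw [cauchySeq_iff_tendsto_dist_atTop_0]
  simpa using hdist.sqrt

theorem exists_norm_le_of_isCompactOperator [CompleteSpace H] (hj : IsCompactOperator j)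
    (hne : ∃ u, ‖j u‖ = 1) : ∃ L, ‖j L‖ = 1 ∧ ∀ u, ‖j u‖ = 1 → ‖L‖ ≤ ‖u‖ := by
  set S := {c | ∃ w, ‖j w‖ = 1 ∧ c = ‖w‖ ^ 2}
  have hS : BddBelow S := ⟨0, by rintro _ ⟨w, -, rfl⟩; positivity⟩
  obtain ⟨u₀, hu₀⟩ := hne
  obtain ⟨c, hc_anti, hc_lim, hcS⟩ :=
    exists_seq_tendsto_sInf (⟨_, u₀, hu₀, rfl⟩ : S.Nonempty) hS
  choose u hju hcu using hcS
  have hball : ∀ n, u n ∈ Metric.closedBall 0 ‖u 0‖ := fun n ↦ by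
    rw [mem_closedBall_zero_iff]
    exact (sq_le_sq₀ (norm_nonneg _) (norm_nonneg _)).mp (hcu n ▸ hcu 0 ▸ hc_anti n.zero_le)
  obtain ⟨v, -, φ, hφ, hv⟩ :=
    (hj.isCompact_closure_image_closedBall (f := (j : H →ₗ[ℝ] E)) ‖u 0‖).tendsto_subseq
      fun n ↦ subset_closure (Set.mem_image_of_mem j (hball n))
  have hv1 : ‖v‖ = 1 := tendsto_nhds_unique hv.norm <| by
    simp only [Function.comp_apply, hju]
    exact tendsto_const_nhds
  have hcφ : Tendsto (fun n ↦ ‖u (φ n)‖ ^ 2) atTop (𝓝 (sInf S)) :=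
    (hc_lim.comp hφ.tendsto_atTop).congr fun n ↦ hcu (φ n)
  have hcauchy : CauchySeq (u ∘ φ) :=
    cauchySeq_of_tendsto_norm_sq j (sInf_mul_norm_sq_le j) hv (by rwa [hv1, one_pow, mul_one])
  obtain ⟨L, hL⟩ := cauchySeq_tendsto_of_complete hcauchy
  have hjL : j L = v := tendsto_nhds_unique ((j.continuous.tendsto L).comp hL) hv
  have hLS : ‖L‖ ^ 2 = sInf S := tendsto_nhds_unique (hL.norm.pow 2) hcφ
  refine ⟨L, hjL ▸ hv1, fun w hw ↦ ?_⟩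
  exact (sq_le_sq₀ (norm_nonneg _) (norm_nonneg _)).mp (hLS ▸ csInf_le hS ⟨w, hw, rfl⟩)

end Rayleigh

theorem stmt_11_general {H E : Type*} [NormedAddCommGroup H] [InnerProductSpace ℝ H]
    [CompleteSpace H] [NormedAddCommGroup E] [NormedSpace ℝ E]
    (j : H →L[ℝ] E) (hj : IsCompactOperator j)
    (φ₁ : H)
    (lam1 lamstar : ℝ)
    (hlam1 : lam1 = sInf {c : ℝ | ∃ u : H, ‖j u‖ = 1 ∧ c = ‖u‖ ^ 2})
    (hunique : ∀ u : H, ‖j u‖ = 1 → ‖u‖ ^ 2 = lam1 → ∃ t : ℝ, u = t • φ₁)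
    (hlamstar : lamstar =
      sInf {c : ℝ | ∃ u : H, (inner ℝ φ₁ u : ℝ) = 0 ∧ ‖j u‖ = 1 ∧ c = ‖u‖ ^ 2})
    (hne : ∃ u : H, (inner ℝ φ₁ u : ℝ) = 0 ∧ ‖j u‖ = 1) :
    lam1 < lamstar := by
  set W := (ℝ ∙ φ₁)ᗮ
  have hW (u : H) : u ∈ W ↔ inner ℝ φ₁ u = 0 :=
    Submodule.mem_orthogonal_singleton_iff_inner_right
  obtain ⟨L, hjL, hLmin⟩ := exists_norm_le_of_isCompactOperator (j ∘L W.subtypeL)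
    (hj.comp_clm _) (by obtain ⟨u, hu, hju⟩ := hne; exact ⟨⟨u, (hW u).2 hu⟩, hju⟩)
  have hlamstar_eq : lamstar = ‖(L : H)‖ ^ 2 := hlamstar ▸ IsLeast.csInf_eq
    ⟨⟨L, (hW L).1 L.2, hjL, rfl⟩, by
      rintro _ ⟨u, hu, hju, rfl⟩
      exact (sq_le_sq₀ (norm_nonneg _) (norm_nonneg _)).mpr (hLmin ⟨u, (hW u).2 hu⟩ hju)⟩
  have hle : lam1 ≤ ‖(L : H)‖ ^ 2 :=
    hlam1 ▸ csInf_le ⟨0, by rintro _ ⟨w, -, rfl⟩; positivity⟩ ⟨L, hjL, rfl⟩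
  rw [hlamstar_eq]
  refine hle.lt_of_ne fun heq ↦ ?_
  obtain ⟨t, ht⟩ := hunique L hjL heq.symm
  have hL : (L : H) ∈ ℝ ∙ φ₁ :=
    ht ▸ Submodule.smul_mem _ t (Submodule.mem_span_singleton_self φ₁)
  have hL0 : (L : H) = 0 :=
    inner_self_eq_zero.mp (Submodule.inner_right_of_mem_orthogonal hL L.2)
  simp [hL0] at hjL

theorem stmt_11 {H E : Type*} [NormedAddCommGroup H] [InnerProductSpace ℝ H]
    [CompleteSpace H] [NormedAddCommGroup E] [NormedSpace ℝ E]
    (j : H →L[ℝ] E) (hj : IsCompactOperator j)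
    (φ₁ : H) (hφn : ‖j φ₁‖ = 1)
    (lam1 lamstar : ℝ)
    (hlam1 : lam1 = sInf {c : ℝ | ∃ u : H, ‖j u‖ = 1 ∧ c = ‖u‖ ^ 2})
    (hattained : ‖φ₁‖ ^ 2 = lam1)
    (hunique : ∀ u : H, ‖j u‖ = 1 → ‖u‖ ^ 2 = lam1 → ∃ t : ℝ, u = t • φ₁)
    (hlamstar : lamstar =
      sInf {c : ℝ | ∃ u : H, (inner ℝ φ₁ u : ℝ) = 0 ∧ ‖j u‖ = 1 ∧ c = ‖u‖ ^ 2})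
    (hne : ∃ u : H, (inner ℝ φ₁ u : ℝ) = 0 ∧ ‖j u‖ = 1) :
    lam1 < lamstar :=
  stmt_11_general j hj φ₁ lam1 lamstar hlam1 hunique hlamstar hne
end
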